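/- For all n ≥ 1, G_{2n} = sum_{j=1}^{n} (-1)^{n+j} T(n,j) (j-1)! j!, where T(n,j) are the central factorial numbers of the second kind. -/
import Mathlib


/-- Gandhi polynomials: `F 1 = 1`, `F_{n+1}(z) = (z+1)^2 F_n(z+1) - z^2 F_n(z)`. -/
def gandhiF : ℕ → ℚ → ℚ
  | 0, _ => 1
  | 1, _ => 1
  | n + 2, z => (z + 1) ^ 2 * gandhiF (n + 1) (z + 1) - z ^ 2 * gandhiF (n + 1) z

/-- Genocchi numbers of the first kind: `genocchi n = G_{2n} = F_n(0)`. -/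
def genocchi (n : ℕ) : ℚ := gandhiF n 0

/-- Central factorial numbers of the second kind. -/
def centralT : ℕ → ℕ → ℚ
  | 0, 0 => 1
  | 0, _ + 1 => 0
  | _ + 1, 0 => 0
  | n + 1, j + 1 => centralT n j + ((j : ℚ) + 1) ^ 2 * centralT n (j + 1)

lemma centralT_eq_zero : ∀ n j : ℕ, n < j → centralT n j = 0 := by
  intro n
  induction n with
  | zero =>
    intro j hj
    match j, hj with
    | j + 1, _ => rfl
  | succ n ih =>
    intro j hj
    match j, hj with
    | j + 1, hj =>
      have h1 : centralT n j = 0 := ih j (by omega)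
      have h2 : centralT n (j + 1) = 0 := ih (j + 1) (by omega)
      show centralT n j + ((j : ℚ) + 1) ^ 2 * centralT n (j + 1) = 0
      rw [h1, h2]; ring

lemma centralT_zero : ∀ n : ℕ, 1 ≤ n → centralT n 0 = 0 := by
  intro n hn
  match n, hn with
  | n + 1, _ => rfl

/-- Auxiliary polynomial `P_j(z) = j! ∏_{i=1}^{j-1} (z+i)`. -/
def gP (j : ℕ) (z : ℚ) : ℚ := (j.factorial : ℚ) * ∏ i ∈ Finset.range (j - 1), (z + i + 1)

lemma gP_rec (k : ℕ) (z : ℚ) :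
    gP (k + 2) z = (z + 1) ^ 2 * gP (k + 1) (z + 1) - (z ^ 2 - ((k : ℚ) + 1) ^ 2) * gP (k + 1) z := by
  unfold gP
  simp only [show k + 2 - 1 = k + 1 from rfl, show k + 1 - 1 = k from rfl]
  have hA : (z + 1) * ∏ i ∈ Finset.range k, (z + 1 + (i : ℚ) + 1)
      = ∏ i ∈ Finset.range (k + 1), (z + (i : ℚ) + 1) := by
    rw [Finset.prod_range_succ']
    have hcongr : (∏ i ∈ Finset.range k, (z + ((i + 1 : ℕ) : ℚ) + 1))
        = ∏ i ∈ Finset.range k, (z + 1 + (i : ℚ) + 1) :=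
      Finset.prod_congr rfl (fun i _ => by push_cast; ring)
    rw [hcongr]
    push_cast
    ring
  have hB : (∏ i ∈ Finset.range k, (z + (i : ℚ) + 1)) * (z + (k : ℚ) + 1)
      = ∏ i ∈ Finset.range (k + 1), (z + (i : ℚ) + 1) := by
    rw [Finset.prod_range_succ]
  have hf2 : ((k + 2).factorial : ℚ) = ((k : ℚ) + 2) * ((k + 1).factorial : ℚ) := by
    rw [Nat.factorial_succ]; push_cast; ring
  rw [hf2]
  have expand : (z + 1) ^ 2 * (((k + 1).factorial : ℚ) * ∏ i ∈ Finset.range k, (z + 1 + (i : ℚ) + 1))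
      = ((k + 1).factorial : ℚ) * (z + 1) * ((z + 1) * ∏ i ∈ Finset.range k, (z + 1 + (i : ℚ) + 1)) := by
    ring
  rw [expand, hA]
  have expand2 : (z ^ 2 - ((k : ℚ) + 1) ^ 2) * (((k + 1).factorial : ℚ) * ∏ i ∈ Finset.range k, (z + (i : ℚ) + 1))
      = ((k + 1).factorial : ℚ) * (z - ((k : ℚ) + 1)) * ((∏ i ∈ Finset.range k, (z + (i : ℚ) + 1)) * (z + (k : ℚ) + 1)) := by
    ring
  rw [expand2, hB]
  ring

lemma gandhiF_eq (n : ℕ) (hn : 1 ≤ n) (z : ℚ) :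
    gandhiF n z = ∑ j ∈ Finset.range n, (-1) ^ (n + j + 1) * centralT n (j + 1) * gP (j + 1) z := by
  induction n, hn using Nat.le_induction generalizing z with
  | base =>
    simp [gandhiF, centralT, gP]
  | succ n hn ih =>
    have hstep : gandhiF (n + 1) z = (z + 1) ^ 2 * gandhiF n (z + 1) - z ^ 2 * gandhiF n z := by
      match n, hn with
      | n + 1, _ => rfl
    rw [hstep, ih (z + 1), ih z]
    have key : ∀ j ∈ Finset.range n,
        (-1 : ℚ) ^ (n + j + 1) * centralT n (j + 1) *
          ((z + 1) ^ 2 * gP (j + 1) (z + 1) - z ^ 2 * gP (j + 1) z)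
        = (-1 : ℚ) ^ (n + j + 1) * centralT n (j + 1) *
          (gP (j + 2) z - ((j : ℚ) + 1) ^ 2 * gP (j + 1) z) := by
      intro j _
      have := gP_rec j z
      rw [this]; ring
    have lhs_eq : (z + 1) ^ 2 * (∑ j ∈ Finset.range n, (-1) ^ (n + j + 1) * centralT n (j + 1) * gP (j + 1) (z + 1))
        - z ^ 2 * (∑ j ∈ Finset.range n, (-1) ^ (n + j + 1) * centralT n (j + 1) * gP (j + 1) z)
        = ∑ j ∈ Finset.range n, (-1 : ℚ) ^ (n + j + 1) * centralT n (j + 1) *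
            (gP (j + 2) z - ((j : ℚ) + 1) ^ 2 * gP (j + 1) z) := by
      rw [Finset.mul_sum, Finset.mul_sum, ← Finset.sum_sub_distrib]
      apply Finset.sum_congr rfl
      intro j hj
      rw [← key j hj]; ring
    rw [lhs_eq]
    -- now work on the RHS sum
    have hT : ∀ j : ℕ, centralT (n + 1) (j + 1) = centralT n j + ((j : ℚ) + 1) ^ 2 * centralT n (j + 1) := by
      intro j; rfl
    have rhs_eq : ∑ j ∈ Finset.range (n + 1), (-1 : ℚ) ^ (n + 1 + j + 1) * centralT (n + 1) (j + 1) * gP (j + 1) z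
        = (∑ j ∈ Finset.range (n + 1), (-1 : ℚ) ^ (n + j) * centralT n j * gP (j + 1) z)
          + ∑ j ∈ Finset.range (n + 1), (-1 : ℚ) ^ (n + j) * ((j : ℚ) + 1) ^ 2 * centralT n (j + 1) * gP (j + 1) z := by
      rw [← Finset.sum_add_distrib]
      apply Finset.sum_congr rfl
      intro j _
      rw [hT j]
      have hsign : (-1 : ℚ) ^ (n + 1 + j + 1) = (-1 : ℚ) ^ (n + j) := by
        rw [show n + 1 + j + 1 = n + j + 2 by omega, pow_add]; ring
      rw [hsign]; ring
    rw [rhs_eq]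
    have first_eq : ∑ j ∈ Finset.range (n + 1), (-1 : ℚ) ^ (n + j) * centralT n j * gP (j + 1) z
        = ∑ j ∈ Finset.range n, (-1 : ℚ) ^ (n + j + 1) * centralT n (j + 1) * gP (j + 2) z := by
      rw [Finset.sum_range_succ']
      rw [centralT_zero n hn]
      simp only [mul_zero, zero_mul, add_zero]
      apply Finset.sum_congr rfl
      intro j _
      ring_nf
    have second_eq : ∑ j ∈ Finset.range (n + 1), (-1 : ℚ) ^ (n + j) * ((j : ℚ) + 1) ^ 2 * centralT n (j + 1) * gP (j + 1) z
        = ∑ j ∈ Finset.range n, (-1 : ℚ) ^ (n + j) * ((j : ℚ) + 1) ^ 2 * centralT n (j + 1) * gP (j + 1) z := by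
      rw [Finset.sum_range_succ, centralT_eq_zero n (n + 1) (by omega)]
      simp only [mul_zero, zero_mul, add_zero]
    rw [first_eq, second_eq, ← Finset.sum_add_distrib]
    apply Finset.sum_congr rfl
    intro j _
    have hsign : (-1 : ℚ) ^ (n + j) = -(-1 : ℚ) ^ (n + j + 1) := by
      rw [pow_succ]; ring
    rw [hsign]; ring

lemma prod_id (m : ℕ) : (∏ i ∈ Finset.range m, ((i : ℚ) + 1)) = (m.factorial : ℚ) := by
  induction m with
  | zero => simp
  | succ m ih =>
    rw [Finset.prod_range_succ, ih, Nat.factorial_succ]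
    push_cast; ring

lemma gP_zero (j : ℕ) : gP (j + 1) 0 = (j.factorial : ℚ) * ((j + 1).factorial : ℚ) := by
  unfold gP
  simp only [Nat.add_sub_cancel, zero_add]
  rw [prod_id]
  ring

theorem genocchi_central_factorial' (n : ℕ) (hn : 1 ≤ n) :
    genocchi n =
      ∑ j ∈ Finset.Icc 1 n,
        (-1) ^ (n + j) * centralT n j * ((j - 1).factorial : ℚ) * (j.factorial : ℚ) := by
  have h := gandhiF_eq n hn 0
  unfold genocchi
  rw [h]
  rw [← Finset.Ico_add_one_right_eq_Icc, Finset.sum_Ico_eq_sum_range]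
  apply Finset.sum_congr rfl
  intro j _
  rw [gP_zero j]
  have : 1 + j - 1 = j := by omega
  rw [this]
  have hsign : (-1 : ℚ) ^ (n + j + 1) = (-1 : ℚ) ^ (n + (1 + j)) := by
    congr 1; omega
  rw [hsign]
  ring
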